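/- Let G = (V, E) be a finite directed graph and let r be an element not in V. Then G has a proper 3-coloring (a function c : V → {1,2,3} with c(u) ≠ c(v) for every edge (u,v) ∈ E) if and only if there exist three pairs (E1, F1), (E2, F2), (E3, F3) of subsets of V ∪ {r} such that: (a) for every vertex v ∈ V there is some k ∈ {1,2,3} with {r, v} ∩ Ek = ∅ and {r, v} ∩ Fk ≠ ∅, and (b) for every edge (u, v) ∈ E and every k ∈ {1,2,3}, {r, u, v} ∩ Ek ≠ ∅ or {r, u, v} ∩ Fk = ∅. (This is the correctness of the reduction from 3-Coloring used to prove NP-hardness of consistency with a Rabin condition of three pairs, where {r,v} and {r,u,v} are the infinity sets induced by the sample words in the constructed transition system.) -/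

import Mathlib

/-!
A vertex `v` is encoded by the set `{r, v}` and an edge `(u, v)` by `{r, u, v} = {r, u} ∪ {r, v}`.
A coloring `c` gives the pairs `E k = {v | c v ≠ k}`, `F k = {v | c v = k}`, so that a set is
accepted through pair `k` exactly when all its vertices have color `k`; an edge set is then never
accepted. Conversely, color `v` by a pair accepting `{r, v}`: acceptance through a fixed pair is
closed under unions, so a monochromatic edge would make `{r, u, v}` accepted.
-/

section RabinPair

variable {α : Type*}

def AcceptsVia (P : Set α × Set α) (S : Set α) : Prop :=
  S ∩ P.1 = ∅ ∧ (S ∩ P.2).Nonempty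

theorem not_acceptsVia_iff {P : Set α × Set α} {S : Set α} :
    ¬ AcceptsVia P S ↔ (S ∩ P.1).Nonempty ∨ S ∩ P.2 = ∅ := by
  rw [AcceptsVia, ← Set.not_nonempty_iff_eq_empty, ← Set.not_nonempty_iff_eq_empty]
  tauto

theorem AcceptsVia.union {P : Set α × Set α} {A B : Set α} (hA : AcceptsVia P A)
    (hB : AcceptsVia P B) : AcceptsVia P (A ∪ B) := by
  refine ⟨?_, hA.2.mono (Set.inter_subset_inter_left _ Set.subset_union_left)⟩
  rw [Set.union_inter_distrib_right, hA.1, hB.1, Set.union_empty]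

end RabinPair

section Coloring

variable {V ι : Type*}

def rabinPairsOfColoring (c : V → ι) (k : ι) : Set (Option V) × Set (Option V) :=
  (some '' {v | c v ≠ k}, some '' {v | c v = k})

theorem acceptsVia_rabinPairsOfColoring_iff {c : V → ι} {k : ι} {S : Set (Option V)} :
    AcceptsVia (rabinPairsOfColoring c k) S ↔
      (∀ v, some v ∈ S → c v = k) ∧ ∃ v, some v ∈ S ∧ c v = k := by
  simp only [AcceptsVia, rabinPairsOfColoring, Set.eq_empty_iff_forall_notMem, Set.Nonempty,
    Set.mem_inter_iff, Set.mem_image]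
  constructor
  · rintro ⟨havoid, x, hxS, v, hv, rfl⟩
    exact ⟨fun w hw => by_contra fun hw' => havoid _ ⟨hw, w, hw', rfl⟩, v, hxS, hv⟩
  · rintro ⟨hall, v, hvS, hv⟩
    exact ⟨fun x ⟨hxS, w, hw, hwx⟩ => hw (hall w (hwx ▸ hxS)), _, hvS, v, hv, rfl⟩

theorem insert_none_some_eq_union (u v : V) :
    ({none, some u, some v} : Set (Option V)) = {none, some u} ∪ {none, some v} := by
  ext x
  simp only [Set.mem_insert_iff, Set.mem_singleton_iff, Set.mem_union]
  tauto

theorem exists_coloring_iff_exists_rabinPairs (E : Set (V × V)) :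
    (∃ c : V → ι, ∀ e ∈ E, c e.1 ≠ c e.2) ↔
      ∃ EF : ι → Set (Option V) × Set (Option V),
        (∀ v, ∃ k, AcceptsVia (EF k) {none, some v}) ∧
        ∀ e ∈ E, ∀ k, ¬ AcceptsVia (EF k) {none, some e.1, some e.2} := by
  constructor
  · rintro ⟨c, hc⟩
    refine ⟨rabinPairsOfColoring c, fun v => ⟨c v, ?_⟩, fun e he k hacc => ?_⟩
    · exact acceptsVia_rabinPairsOfColoring_iff.2 ⟨by simp, v, by simp⟩
    · have hcol := (acceptsVia_rabinPairsOfColoring_iff.1 hacc).1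
      exact hc e he ((hcol e.1 (by simp)).trans (hcol e.2 (by simp)).symm)
  · rintro ⟨EF, hvertex, hedge⟩
    choose c hc using hvertex
    refine ⟨c, fun e he hmono => hedge e he (c e.1) ?_⟩
    rw [insert_none_some_eq_union]
    exact (hc e.1).union (hmono ▸ hc e.2)

end Coloring

theorem threeColoring_iff_rabin {V : Type*} (E : Set (V × V)) :
    (∃ c : V → Fin 3, ∀ e ∈ E, c e.1 ≠ c e.2) ↔
      ∃ EF : Fin 3 → Set (Option V) × Set (Option V),
        (∀ v : V, ∃ k : Fin 3,
          ({none, some v} : Set (Option V)) ∩ (EF k).1 = ∅ ∧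
          (({none, some v} : Set (Option V)) ∩ (EF k).2).Nonempty) ∧
        (∀ e ∈ E, ∀ k : Fin 3,
          (({none, some e.1, some e.2} : Set (Option V)) ∩ (EF k).1).Nonempty ∨
          ({none, some e.1, some e.2} : Set (Option V)) ∩ (EF k).2 = ∅) := by
  have h := exists_coloring_iff_exists_rabinPairs (ι := Fin 3) E
  simp only [not_acceptsVia_iff] at h
  exact h
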